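/- Let A be an associative unital algebra over ℂ with a comultiplication Δ such that the left leg of Δ is all of A. If there exists a faithful left integral on A, then the linear map T₁ : A ⊗ A → A ⊗ A determined by T₁(a ⊗ b) = Δ(a)(1 ⊗ b) is surjective. -/

import Mathlib

open TensorProduct

noncomputable section

variable {A : Type*} [Ring A] [Algebra ℂ A]

/-- The slice map `id ⊗ ω : A ⊗ A → A`. -/
def sliceR (ω : A →ₗ[ℂ] ℂ) : A ⊗[ℂ] A →ₗ[ℂ] A :=
  (TensorProduct.rid ℂ A).toLinearMap ∘ₗ TensorProduct.map LinearMap.id ω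

/-- The slice map `ω ⊗ id : A ⊗ A → A`. -/
def sliceL (ω : A →ₗ[ℂ] ℂ) : A ⊗[ℂ] A →ₗ[ℂ] A :=
  (TensorProduct.lid ℂ A).toLinearMap ∘ₗ TensorProduct.map ω LinearMap.id

/-- Coassociativity of a comultiplication `Δ : A → A ⊗ A`:
`(Δ ⊗ id) ∘ Δ = (id ⊗ Δ) ∘ Δ` (up to the associator). -/
def IsCoassoc (Δ : A →ₐ[ℂ] A ⊗[ℂ] A) : Prop :=
  ∀ a : A,
    TensorProduct.assoc ℂ A A A (TensorProduct.map Δ.toLinearMap LinearMap.id (Δ a)) =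
      TensorProduct.map LinearMap.id Δ.toLinearMap (Δ a)

/-- A left integral: a nonzero functional with `(id ⊗ φ)(Δ a) = φ(a)·1` for all `a`. -/
def IsLeftIntegral (Δ : A →ₐ[ℂ] A ⊗[ℂ] A) (φ : A →ₗ[ℂ] ℂ) : Prop :=
  φ ≠ 0 ∧ ∀ a : A, sliceR φ (Δ a) = φ a • (1 : A)

/-- A right integral: a nonzero functional with `(ψ ⊗ id)(Δ a) = ψ(a)·1` for all `a`. -/
def IsRightIntegral (Δ : A →ₐ[ℂ] A ⊗[ℂ] A) (ψ : A →ₗ[ℂ] ℂ) : Prop :=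
  ψ ≠ 0 ∧ ∀ a : A, sliceL ψ (Δ a) = ψ a • (1 : A)

/-- A faithful functional: the bilinear form `(a, b) ↦ ω(ab)` is non-degenerate. -/
def IsFaithful (ω : A →ₗ[ℂ] ℂ) : Prop :=
  (∀ b : A, (∀ a : A, ω (a * b) = 0) → b = 0) ∧
  (∀ b : A, (∀ a : A, ω (b * a) = 0) → b = 0)

/-- The left leg of an element `x ∈ A ⊗ A`: the span of `{(id ⊗ ω)(x) : ω ∈ A*}`. -/
def leftLegOf (x : A ⊗[ℂ] A) : Submodule ℂ A :=
  Submodule.span ℂ {y : A | ∃ ω : A →ₗ[ℂ] ℂ, y = sliceR ω x}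

/-- The right leg of an element `x ∈ A ⊗ A`: the span of `{(ω ⊗ id)(x) : ω ∈ A*}`. -/
def rightLegOf (x : A ⊗[ℂ] A) : Submodule ℂ A :=
  Submodule.span ℂ {y : A | ∃ ω : A →ₗ[ℂ] ℂ, y = sliceL ω x}

/-- The left leg of `Δ`: the span of `{(id ⊗ ω)(Δ a) : a ∈ A, ω ∈ A*}`. -/
def leftLeg (Δ : A →ₐ[ℂ] A ⊗[ℂ] A) : Submodule ℂ A :=
  Submodule.span ℂ {y : A | ∃ (a : A) (ω : A →ₗ[ℂ] ℂ), y = sliceR ω (Δ a)}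

/-- The right leg of `Δ`: the span of `{(ω ⊗ id)(Δ a) : a ∈ A, ω ∈ A*}`. -/
def rightLeg (Δ : A →ₐ[ℂ] A ⊗[ℂ] A) : Submodule ℂ A :=
  Submodule.span ℂ {y : A | ∃ (a : A) (ω : A →ₗ[ℂ] ℂ), y = sliceL ω (Δ a)}

/-- A comultiplication is full if both of its legs are all of `A`. -/
def IsFull (Δ : A →ₐ[ℂ] A ⊗[ℂ] A) : Prop :=
  leftLeg Δ = ⊤ ∧ rightLeg Δ = ⊤

/-- The linear map `T₁` with `T₁ (a ⊗ b) = Δ(a) * (1 ⊗ b)`. -/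
def T1 (Δ : A →ₐ[ℂ] A ⊗[ℂ] A) : A ⊗[ℂ] A →ₗ[ℂ] A ⊗[ℂ] A :=
  LinearMap.mul' ℂ (A ⊗[ℂ] A) ∘ₗ
    TensorProduct.map Δ.toLinearMap (TensorProduct.mk ℂ A A 1)

/-- The linear map `T₁'` with `T₁' (a ⊗ b) = Δ(a) * (b ⊗ 1)`. -/
def T1' (Δ : A →ₐ[ℂ] A ⊗[ℂ] A) : A ⊗[ℂ] A →ₗ[ℂ] A ⊗[ℂ] A :=
  LinearMap.mul' ℂ (A ⊗[ℂ] A) ∘ₗ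
    TensorProduct.map Δ.toLinearMap ((TensorProduct.mk ℂ A A).flip 1)

/-- The linear map `T₂` with `T₂ (a ⊗ b) = (a ⊗ 1) * Δ(b)`. -/
def T2 (Δ : A →ₐ[ℂ] A ⊗[ℂ] A) : A ⊗[ℂ] A →ₗ[ℂ] A ⊗[ℂ] A :=
  LinearMap.mul' ℂ (A ⊗[ℂ] A) ∘ₗ
    TensorProduct.map ((TensorProduct.mk ℂ A A).flip 1) Δ.toLinearMap

/-- The linear map `T₂'` with `T₂' (a ⊗ b) = (1 ⊗ a) * Δ(b)`. -/
def T2' (Δ : A →ₐ[ℂ] A ⊗[ℂ] A) : A ⊗[ℂ] A →ₗ[ℂ] A ⊗[ℂ] A :=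
  LinearMap.mul' ℂ (A ⊗[ℂ] A) ∘ₗ
    TensorProduct.map (TensorProduct.mk ℂ A A 1) Δ.toLinearMap

/-- A left cointegral: a nonzero element `h` with `Δ(a)(1 ⊗ h) = a ⊗ h` for all `a`. -/
def IsLeftCointegral (Δ : A →ₐ[ℂ] A ⊗[ℂ] A) (h : A) : Prop :=
  h ≠ 0 ∧ ∀ a : A, Δ a * ((1 : A) ⊗ₜ[ℂ] h) = a ⊗ₜ[ℂ] h

/-- A right cointegral: a nonzero element `k` with `(k ⊗ 1)Δ(a) = k ⊗ a` for all `a`. -/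
def IsRightCointegral (Δ : A →ₐ[ℂ] A ⊗[ℂ] A) (k : A) : Prop :=
  k ≠ 0 ∧ ∀ a : A, (k ⊗ₜ[ℂ] (1 : A)) * Δ a = k ⊗ₜ[ℂ] a

/-- `Δ₁₃(a) = (1 ⊗ σ)(Δ(a) ⊗ 1)`, viewed in `A ⊗ (A ⊗ A)`. -/
def delta13 (Δ : A →ₐ[ℂ] A ⊗[ℂ] A) (a : A) : A ⊗[ℂ] (A ⊗[ℂ] A) :=
  TensorProduct.map LinearMap.id (TensorProduct.comm ℂ A A).toLinearMap
    (TensorProduct.assoc ℂ A A A (Δ a ⊗ₜ[ℂ] (1 : A)))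

/-!
The range of `T₁` is stable under right multiplication by `1 ⊗ A`, so it suffices to show that it
contains every `c ⊗ 1`. Applying `id ⊗ (id ⊗ φ) Δ` to `Δ(x)(1 ⊗ y)` gives, by invariance of `φ`,
`(id ⊗ φ)(Δ(x)(1 ⊗ y)) ⊗ 1`, and, by coassociativity, the sum of the `φ(x₂y₂) Δ(x₁)(1 ⊗ y₁)`,
which lies in the range of `T₁`. Finally, a functional `ξ` vanishing on all the
`(id ⊗ φ)(Δ(x)(1 ⊗ y))` satisfies `φ(((ξ ⊗ id) Δ(x)) y) = 0` for every `y`, so faithfulness forces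
`(ξ ⊗ id) Δ(x) = 0`, i.e. `ξ` vanishes on the left leg of `Δ(x)`. Hence these elements span a
space containing the left leg of `Δ`, which is `A`.
-/

@[simp]
lemma sliceR_tmul (ω : A →ₗ[ℂ] ℂ) (a b : A) : sliceR ω (a ⊗ₜ[ℂ] b) = ω b • a := by
  simp [sliceR]

@[simp]
lemma sliceL_tmul (ω : A →ₗ[ℂ] ℂ) (a b : A) : sliceL ω (a ⊗ₜ[ℂ] b) = ω a • b := by
  simp [sliceL]

@[simp]
lemma T1_tmul (Δ : A →ₐ[ℂ] A ⊗[ℂ] A) (a b : A) : T1 Δ (a ⊗ₜ[ℂ] b) = Δ a * (1 ⊗ₜ[ℂ] b) := by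
  simp [T1]

section

variable {Δ : A →ₐ[ℂ] A ⊗[ℂ] A} {φ : A →ₗ[ℂ] ℂ}

lemma apply_sliceR_eq_apply_sliceL (ξ ω : A →ₗ[ℂ] ℂ) (w : A ⊗[ℂ] A) :
    ξ (sliceR ω w) = ω (sliceL ξ w) := by
  induction w using TensorProduct.induction_on with
  | zero => simp
  | tmul a b => simp [mul_comm]
  | add u v hu hv => simp [hu, hv]

lemma sliceL_mul_one_tmul (ξ : A →ₗ[ℂ] ℂ) (w : A ⊗[ℂ] A) (y : A) :
    sliceL ξ (w * (1 ⊗ₜ[ℂ] y)) = sliceL ξ w * y := by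
  induction w using TensorProduct.induction_on with
  | zero => simp
  | tmul a b => simp
  | add u v hu hv => simp [add_mul, hu, hv]

lemma leftLegOf_le_span_sliceR_mul_one_tmul
    (hφ : ∀ b : A, (∀ a : A, φ (b * a) = 0) → b = 0) (w : A ⊗[ℂ] A) :
    leftLegOf w ≤ Submodule.span ℂ (Set.range fun y : A ↦ sliceR φ (w * (1 ⊗ₜ[ℂ] y))) := by
  refine Submodule.span_le.mpr ?_
  rintro _ ⟨ω, rfl⟩
  by_contra hω
  obtain ⟨ξ, hξω, hξ⟩ := Submodule.exists_dual_map_eq_bot_of_notMem hω inferInstance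
  have hξw : sliceL ξ w = 0 := hφ _ fun y ↦ by
    have hy : ξ (sliceR φ (w * (1 ⊗ₜ[ℂ] y))) ∈ (⊥ : Submodule ℂ ℂ) :=
      hξ ▸ Submodule.mem_map_of_mem (Submodule.subset_span ⟨y, rfl⟩)
    rwa [Submodule.mem_bot, apply_sliceR_eq_apply_sliceL, sliceL_mul_one_tmul] at hy
  exact hξω (by rw [apply_sliceR_eq_apply_sliceL, hξw, map_zero])

lemma leftLeg_le {p : Submodule ℂ A} (h : ∀ a, leftLegOf (Δ a) ≤ p) : leftLeg Δ ≤ p :=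
  Submodule.span_le.mpr fun _ ⟨a, ω, hy⟩ ↦ h a (Submodule.subset_span ⟨ω, hy⟩)

lemma lTensor_sliceR_lTensor_eq_tmul_one (hφ : ∀ a : A, sliceR φ (Δ a) = φ a • (1 : A))
    (w : A ⊗[ℂ] A) :
    (sliceR φ).lTensor A (Δ.toLinearMap.lTensor A w) = sliceR φ w ⊗ₜ[ℂ] 1 := by
  induction w using TensorProduct.induction_on with
  | zero => simp
  | tmul c d => simp [hφ, TensorProduct.smul_tmul']
  | add u v hu hv => simp [hu, hv, TensorProduct.add_tmul]

lemma lTensor_sliceR_assoc (w : (A ⊗[ℂ] A) ⊗[ℂ] A) :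
    (sliceR φ).lTensor A (TensorProduct.assoc ℂ A A A w) =
      TensorProduct.rid ℂ (A ⊗[ℂ] A) (φ.lTensor (A ⊗[ℂ] A) w) := by
  have h : (sliceR φ).lTensor A ∘ₗ (TensorProduct.assoc ℂ A A A).toLinearMap =
      (TensorProduct.rid ℂ (A ⊗[ℂ] A)).toLinearMap ∘ₗ φ.lTensor (A ⊗[ℂ] A) :=
    TensorProduct.ext_threefold fun a b c ↦ by
      simp [TensorProduct.tmul_smul, TensorProduct.smul_tmul']
  exact LinearMap.congr_fun h w

lemma rid_lTensor_rTensor_mul_mem_range_T1 (p q : A ⊗[ℂ] A) :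
    TensorProduct.rid ℂ (A ⊗[ℂ] A) (φ.lTensor (A ⊗[ℂ] A) (Δ.toLinearMap.rTensor A p *
      (Algebra.TensorProduct.assoc ℂ ℂ ℂ A A A).symm (1 ⊗ₜ[ℂ] q))) ∈ LinearMap.range (T1 Δ) := by
  induction p using TensorProduct.induction_on with
  | zero => simp
  | add u v hu hv => simpa [add_mul] using add_mem hu hv
  | tmul x₁ x₂ =>
    induction q using TensorProduct.induction_on with
    | zero => simp
    | add u v hu hv =>
      rw [TensorProduct.tmul_add, map_add, mul_add, map_add, map_add]
      exact add_mem hu hv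
    | tmul y₁ y₂ => exact ⟨φ (x₂ * y₂) • x₁ ⊗ₜ[ℂ] y₁, by simp⟩

lemma sliceR_mul_one_tmul_tmul_one_mem_range_T1 (hΔ : IsCoassoc Δ)
    (hφ : ∀ a : A, sliceR φ (Δ a) = φ a • (1 : A)) (x y : A) :
    sliceR φ (Δ x * (1 ⊗ₜ[ℂ] y)) ⊗ₜ[ℂ] (1 : A) ∈ LinearMap.range (T1 Δ) := by
  let α := Algebra.TensorProduct.assoc ℂ ℂ ℂ A A A
  have hcoassoc : Δ.toLinearMap.lTensor A (Δ x) = α (Δ.toLinearMap.rTensor A (Δ x)) :=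
    (hΔ x).symm
  have hmul : Δ.toLinearMap.lTensor A (Δ x * (1 ⊗ₜ[ℂ] y)) =
      α (Δ.toLinearMap.rTensor A (Δ x) * α.symm (1 ⊗ₜ[ℂ] Δ y)) := by
    calc Δ.toLinearMap.lTensor A (Δ x * (1 ⊗ₜ[ℂ] y))
        = Δ.toLinearMap.lTensor A (Δ x) * (1 ⊗ₜ[ℂ] Δ y) :=
          map_mul (Algebra.TensorProduct.lTensor A Δ) _ _
      _ = α (Δ.toLinearMap.rTensor A (Δ x)) * α (α.symm (1 ⊗ₜ[ℂ] Δ y)) := by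
        rw [hcoassoc, α.apply_symm_apply]
      _ = _ := (map_mul α _ _).symm
  rw [← lTensor_sliceR_lTensor_eq_tmul_one hφ, hmul,
    show α _ = TensorProduct.assoc ℂ A A A _ from rfl, lTensor_sliceR_assoc]
  exact rid_lTensor_rTensor_mul_mem_range_T1 (Δ x) (Δ y)

lemma mul_one_tmul_mem_range_T1 {u : A ⊗[ℂ] A}
    (hu : u ∈ LinearMap.range (T1 Δ)) (d : A) : u * (1 ⊗ₜ[ℂ] d) ∈ LinearMap.range (T1 Δ) := by
  obtain ⟨v, rfl⟩ := hu
  induction v using TensorProduct.induction_on with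
  | zero => simp
  | add v w hv hw => simpa [add_mul] using add_mem hv hw
  | tmul a b => exact ⟨a ⊗ₜ[ℂ] (b * d), by simp [mul_assoc]⟩

lemma range_T1_eq_top_of_tmul_one_mem
    (h : ∀ c : A, c ⊗ₜ[ℂ] (1 : A) ∈ LinearMap.range (T1 Δ)) : LinearMap.range (T1 Δ) = ⊤ := by
  refine eq_top_iff.mpr ?_
  rintro z -
  induction z using TensorProduct.induction_on with
  | zero => exact zero_mem _
  | add u v hu hv => exact add_mem hu hv
  | tmul c d => simpa using mul_one_tmul_mem_range_T1 (h c) d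

end

/-- If the left leg of `Δ` is all of `A` and there is a faithful left integral, then
`T₁ : a ⊗ b ↦ Δ(a)(1 ⊗ b)` is surjective. -/
theorem T1_surjective_of_faithful_left_integral
    (Δ : A →ₐ[ℂ] A ⊗[ℂ] A) (hΔ : IsCoassoc Δ) (hleg : leftLeg Δ = ⊤)
    (φ : A →ₗ[ℂ] ℂ) (hφ : IsLeftIntegral Δ φ) (hφf : IsFaithful φ) :
    Function.Surjective (T1 Δ) := by
  refine LinearMap.range_eq_top.mp (range_T1_eq_top_of_tmul_one_mem fun c ↦ ?_)
  have hle : leftLeg Δ ≤ (LinearMap.range (T1 Δ)).comap ((TensorProduct.mk ℂ A A).flip 1) :=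
    leftLeg_le fun a ↦ (leftLegOf_le_span_sliceR_mul_one_tmul hφf.2 (Δ a)).trans <|
      Submodule.span_le.mpr <| Set.range_subset_iff.mpr fun y ↦
        sliceR_mul_one_tmul_tmul_one_mem_range_T1 hΔ hφ.2 a y
  simpa using hle (hleg ▸ Submodule.mem_top)
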